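/- Let ρ > 0 and C_f, C_φ ≥ 0, and let g, h be holomorphic on an open set containing the closed disc {|z| ≤ ρ}, with |g(z)| ≤ C_f and |h(z)| ≤ C_φ·|z| for all |z| ≤ ρ. For w ∈ ℂ and n ∈ ℕ let P_n(w) denote the n-th Taylor coefficient at 0 of the holomorphic function z ↦ g(z)·e^{−w·h(z)}. Then for all n ∈ ℕ and all w ∈ ℂ one has |P_n(w)| ≤ C_f·e^{C_φ}·(|w|^n + ρ^{−n}). -/

import Mathlib

open Real Complex

/-!
On a disc of radius `r ≤ min ρ |w|⁻¹` the exponent satisfies `|w h(z)| ≤ Cφ |w| |z| ≤ Cφ`,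
so `g e^{-w h}` is bounded there by `Cf e^{Cφ}` independently of `w`, and Cauchy's estimate
bounds its `n`-th Taylor coefficient by `Cf e^{Cφ} r⁻ⁿ`. With `r = ρ` when `ρ |w| ≤ 1` and
`r = |w|⁻¹` otherwise, `r⁻ⁿ ≤ |w|ⁿ + ρ⁻ⁿ`.
-/

lemma norm_iteratedDeriv_div_factorial_le {f : ℂ → ℂ} {c : ℂ} {r M : ℝ} (hr : 0 < r)
    (hf : DifferentiableOn ℂ f (Metric.closedBall c r))
    (hM : ∀ z ∈ Metric.sphere c r, ‖f z‖ ≤ M) (n : ℕ) :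
    ‖iteratedDeriv n f c / (n.factorial : ℂ)‖ ≤ M / r ^ n := by
  have hf' : DiffContOnCl ℂ f (Metric.ball c r) :=
    DifferentiableOn.diffContOnCl (by rwa [closure_ball c hr.ne'])
  have hfact : (0 : ℝ) < n.factorial := mod_cast n.factorial_pos
  rw [norm_div, Complex.norm_natCast, div_le_iff₀ hfact, div_mul_eq_mul_div, mul_comm M]
  exact Complex.norm_iteratedDeriv_le_of_forall_mem_sphere_norm_le n hr hf' hM

lemma norm_exp_neg_mul_le {w u z : ℂ} {C : ℝ} (hC : 0 ≤ C) (hu : ‖u‖ ≤ C * ‖z‖)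
    (hwz : ‖w‖ * ‖z‖ ≤ 1) : ‖Complex.exp (-w * u)‖ ≤ Real.exp C := by
  rw [Complex.norm_exp, Real.exp_le_exp]
  calc (-w * u).re ≤ ‖-w * u‖ := Complex.re_le_norm _
    _ = ‖w‖ * ‖u‖ := by rw [norm_mul, norm_neg]
    _ ≤ ‖w‖ * (C * ‖z‖) := by gcongr
    _ = C * (‖w‖ * ‖z‖) := by ring
    _ ≤ C := mul_le_of_le_one_right hC hwz

lemma norm_taylorCoeff_mul_exp_le {g h : ℂ → ℂ} {r Cf Cφ : ℝ} {w : ℂ} (hr : 0 < r)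
    (hCφ : 0 ≤ Cφ) (hg : DifferentiableOn ℂ g (Metric.closedBall 0 r))
    (hh : DifferentiableOn ℂ h (Metric.closedBall 0 r))
    (hgb : ∀ z : ℂ, ‖z‖ ≤ r → ‖g z‖ ≤ Cf) (hhb : ∀ z : ℂ, ‖z‖ ≤ r → ‖h z‖ ≤ Cφ * ‖z‖)
    (hwr : ‖w‖ * r ≤ 1) (n : ℕ) :
    ‖iteratedDeriv n (fun z : ℂ => g z * Complex.exp (-w * h z)) 0 / (n.factorial : ℂ)‖ ≤
      Cf * Real.exp Cφ / r ^ n := by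
  refine norm_iteratedDeriv_div_factorial_le hr (hg.mul (hh.const_mul (-w)).cexp) ?_ n
  intro z hz
  have hzr : ‖z‖ ≤ r := (mem_sphere_zero_iff_norm.mp hz).le
  rw [Pi.mul_apply, norm_mul]
  have hwz : ‖w‖ * ‖z‖ ≤ 1 := (mul_le_mul_of_nonneg_left hzr (norm_nonneg w)).trans hwr
  exact mul_le_mul (hgb z hzr) (norm_exp_neg_mul_le hCφ (hhb z hzr) hwz)
    (norm_nonneg _) ((norm_nonneg _).trans (hgb z hzr))

lemma exists_radius_inv_pow_le_add {ρ t : ℝ} (hρ : 0 < ρ) (ht : 0 ≤ t) (n : ℕ) :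
    ∃ r, 0 < r ∧ r ≤ ρ ∧ t * r ≤ 1 ∧ (r ^ n)⁻¹ ≤ t ^ n + (ρ ^ n)⁻¹ := by
  by_cases hρt : t * ρ ≤ 1
  · exact ⟨ρ, hρ, le_rfl, hρt, le_add_of_nonneg_left (by positivity)⟩
  · have ht0 : 0 < t := by
      by_contra! h
      exact hρt (by nlinarith)
    refine ⟨t⁻¹, inv_pos.mpr ht0, ?_, (mul_inv_cancel₀ ht0.ne').le, ?_⟩
    · rw [inv_le_comm₀ ht0 hρ, inv_le_iff_one_le_mul₀' hρ]
      linarith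
    · rw [← inv_pow, inv_inv]
      exact le_add_of_nonneg_right (by positivity)

theorem statement17 (ρ Cf Cφ : ℝ) (hρ : 0 < ρ) (hCf : 0 ≤ Cf) (hCφ : 0 ≤ Cφ)
    (U : Set ℂ) (hball : Metric.closedBall (0 : ℂ) ρ ⊆ U)
    (g h : ℂ → ℂ) (hg : DifferentiableOn ℂ g U) (hh : DifferentiableOn ℂ h U)
    (hgb : ∀ z : ℂ, ‖z‖ ≤ ρ → ‖g z‖ ≤ Cf)
    (hhb : ∀ z : ℂ, ‖z‖ ≤ ρ → ‖h z‖ ≤ Cφ * ‖z‖) :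
    ∀ (n : ℕ) (w : ℂ),
      ‖iteratedDeriv n (fun z : ℂ => g z * Complex.exp (-w * h z)) 0 / (n.factorial : ℂ)‖ ≤
        Cf * Real.exp Cφ * (‖w‖ ^ n + (ρ ^ n)⁻¹) := by
  intro n w
  obtain ⟨r, hr, hrρ, hwr, hrn⟩ := exists_radius_inv_pow_le_add hρ (norm_nonneg w) n
  have hsub : Metric.closedBall (0 : ℂ) r ⊆ U :=
    (Metric.closedBall_subset_closedBall hrρ).trans hball
  calc _ ≤ Cf * Real.exp Cφ / r ^ n :=
        norm_taylorCoeff_mul_exp_le hr hCφ (hg.mono hsub) (hh.mono hsub)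
          (fun z hz => hgb z (hz.trans hrρ)) (fun z hz => hhb z (hz.trans hrρ)) hwr n
    _ ≤ Cf * Real.exp Cφ * (‖w‖ ^ n + (ρ ^ n)⁻¹) := by
        rw [div_eq_mul_inv]
        gcongr
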